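/- arXiv:1107.3832 — 2 statements merged into one kernel-verified Lean document; each statement's English description precedes it below -/
import Mathlib

section
/- Let F be a number field of degree g over ℚ with ε = Σᵢ rᵢ ⊗ sᵢ the canonical element of F ⊗_ℚ F built from a basis and its trace-dual basis. Let Λ¹ = {xε : x ∈ F} ⊂ F ⊗_ℚ F, and consider the quotient S_ℚ(F) of F ⊗_ℚ F by the relations a⊗b − b⊗a, with the induced pairing ⟨a⊗b, c⊗d⟩ = Tr(ac)Tr(bd). Define the evaluation map ev : S_ℚ(F) → F by ev(s⊗t) = st. Then an element α ∈ S_ℚ(F) annihilates Λ¹ (i.e. pairs to zero with every element of Λ¹) if and only if ev(α) = 0. -/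
/-! Since `(sᵢ)` is trace-dual to `(rᵢ)`, `Tr(b sᵢ)` is the `i`-th coordinate of `b`, so
`⟨a ⊗ b, x ε⟩ = ∑ᵢ Tr(a x rᵢ) Tr(b sᵢ) = Tr(x a b)`. Hence pairing `α` with `x ε` is
`Tr(x · ev α)`, and the trace form of a separable extension is nondegenerate. -/

open TensorProduct

section TraceDualBasis

variable {K A ι : Type*} [CommRing K] [CommRing A] [Algebra K A] [Fintype ι] [DecidableEq ι]
  (r : Module.Basis ι K A) {s : ι → A}

theorem Module.Basis.trace_mul_dual_eq_repr
    (hs : ∀ i j, Algebra.trace K A (r i * s j) = if i = j then 1 else 0) (b : A) (j : ι) :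
    Algebra.trace K A (b * s j) = r.repr b j := by
  conv_lhs => rw [← r.sum_repr b]
  rw [Finset.sum_mul, map_sum]
  simp [hs]

theorem Module.Basis.sum_trace_mul_trace_mul_dual
    (hs : ∀ i j, Algebra.trace K A (r i * s j) = if i = j then 1 else 0) (a b : A) :
    ∑ i, Algebra.trace K A (a * r i) * Algebra.trace K A (b * s i) = Algebra.trace K A (a * b) :=
  calc ∑ i, Algebra.trace K A (a * r i) * Algebra.trace K A (b * s i)
      = ∑ i, Algebra.trace K A (a * (r.repr b i • r i)) := by
        refine Finset.sum_congr rfl fun i _ => ?_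
        rw [r.trace_mul_dual_eq_repr hs, mul_smul_comm, map_smul, smul_eq_mul, mul_comm]
    _ = Algebra.trace K A (a * b) := by rw [← map_sum, ← Finset.mul_sum, r.sum_repr]

theorem Module.Basis.traceForm_tmul_traceForm_sum_mul_tmul_dual
    (hs : ∀ i j, Algebra.trace K A (r i * s j) = if i = j then 1 else 0)
    (x : A) (β : A ⊗[K] A) :
    ((Algebra.traceForm K A).tmul (Algebra.traceForm K A)) β (∑ i, (x * r i) ⊗ₜ[K] s i)
      = Algebra.trace K A (x * LinearMap.mul' K A β) := by
  induction β using TensorProduct.induction_on with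
  | zero => simp
  | tmul a b =>
    simp only [map_sum, LinearMap.BilinForm.tensorDistrib_tmul, Algebra.traceForm_apply,
      LinearMap.mul'_apply, smul_eq_mul, ← mul_assoc]
    simp only [mul_comm (Algebra.trace K A (b * _)), r.sum_trace_mul_trace_mul_dual hs]
    rw [mul_comm x a]
  | add β₁ β₂ h₁ h₂ => rw [map_add, LinearMap.add_apply, h₁, h₂, map_add, mul_add, map_add]

end TraceDualBasis

theorem stmt3_general (F : Type) [Field F] [NumberField F]
    (g : ℕ)
    (r : Module.Basis (Fin g) ℚ F) (s' : Fin g → F)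
    (hdual : ∀ i j, Algebra.trace ℚ F (r i * s' j) = if i = j then 1 else 0)
    (α : F ⊗[ℚ] F) :
    (∀ x : F,
      ((Algebra.traceForm ℚ F).tmul (Algebra.traceForm ℚ F)) α
        (∑ i, (x * r i) ⊗ₜ[ℚ] s' i) = 0)
      ↔ LinearMap.mul' ℚ F α = 0 := by
  simp only [r.traceForm_tmul_traceForm_sum_mul_tmul_dual hdual]
  refine ⟨fun h => (traceForm_nondegenerate ℚ F).1 _ fun x => ?_, fun h x => by simp [h]⟩
  rw [Algebra.traceForm_apply, mul_comm, h x]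

/-- An element `α` of the (symmetric quotient of the) tensor square of a number field `F`
annihilates `Λ¹ = {x·ε : x ∈ F}` under the pairing `⟨a⊗b, c⊗d⟩ = Tr(ac)Tr(bd)` if and only if
its image under the evaluation map `ev(s⊗t) = st` is zero.  (Both the pairing against the
symmetric elements `x·ε` and the evaluation map descend to the symmetric quotient `S_ℚ(F)`,
so the statement for all `α ∈ F ⊗_ℚ F` is equivalent to the statement on `S_ℚ(F)`.) -/
theorem stmt3 (F : Type) [Field F] [NumberField F]
    (g : ℕ) (hg : Module.finrank ℚ F = g)
    (r : Module.Basis (Fin g) ℚ F) (s' : Fin g → F)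
    (hdual : ∀ i j, Algebra.trace ℚ F (r i * s' j) = if i = j then 1 else 0)
    (α : F ⊗[ℚ] F) :
    (∀ x : F,
      ((Algebra.traceForm ℚ F).tmul (Algebra.traceForm ℚ F)) α
        (∑ i, (x * r i) ⊗ₜ[ℚ] s' i) = 0)
      ↔ LinearMap.mul' ℚ F α = 0 :=
  stmt3_general F g r s' hdual α
end

section
/- Let V be a finite-dimensional vector space over ℚ (or any infinite field), let C ⊆ V be a subset and N ⊆ V a linear subspace with N ⊊ C in the sense that C strictly contains N. Let A ⊆ V be a linear subspace with C ∩ A ⊆ N. If the image of C in V/N is nontrivial (i.e. C ⊄ N), then the image of A in V/N is a proper subspace of V/N; equivalently, dim A − dim(A ∩ N) < dim V − dim N. -/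
namespace Submodule

variable {R M : Type*} [Ring R] [AddCommGroup M] [Module R M]

theorem inter_sup_subset_of_inter_subset {A N : Submodule R M} {C : Set M}
    (hNC : (N : Set M) ⊆ C) (hadd : ∀ x ∈ C, ∀ y ∈ C, x + y ∈ C)
    (hCA : C ∩ (A : Set M) ⊆ N) : C ∩ ((A ⊔ N : Submodule R M) : Set M) ⊆ N := by
  rintro c ⟨hcC, hc⟩
  obtain ⟨a, haA, n, hnN, rfl⟩ := mem_sup.mp hc
  have haC : a ∈ C := by
    simpa using hadd _ hcC _ (hNC (N.neg_mem hnN))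
  exact N.add_mem (hCA ⟨haC, haA⟩) hnN

theorem finrank_sub_finrank_inf_lt_of_sup_ne_top {K V : Type*} [DivisionRing K]
    [AddCommGroup V] [Module K V] [FiniteDimensional K V] {A N : Submodule K V}
    (hsup : A ⊔ N ≠ ⊤) :
    Module.finrank K A - Module.finrank K (A ⊓ N : Submodule K V)
      < Module.finrank K V - Module.finrank K N := by
  have hmod := finrank_sup_add_finrank_inf_eq A N
  have hlt := finrank_lt hsup
  have hN := finrank_mono (le_sup_right : N ≤ A ⊔ N)
  have hinf := finrank_mono (inf_le_left : A ⊓ N ≤ A)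
  omega

end Submodule

theorem stmt5_general (V : Type) [AddCommGroup V] [Module ℚ V] [FiniteDimensional ℚ V]
    (A N : Submodule ℚ V) (C : Set V)
    (hNC : (N : Set V) ⊆ C)
    (hadd : ∀ x ∈ C, ∀ y ∈ C, x + y ∈ C)
    (hCA : C ∩ (A : Set V) ⊆ (N : Set V))
    (hCnotN : ¬ C ⊆ (N : Set V)) :
    Module.finrank ℚ A - Module.finrank ℚ (A ⊓ N : Submodule ℚ V)
      < Module.finrank ℚ V - Module.finrank ℚ N := by
  refine Submodule.finrank_sub_finrank_inf_lt_of_sup_ne_top fun htop => hCnotN ?_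
  intro c hc
  exact Submodule.inter_sup_subset_of_inter_subset hNC hadd hCA ⟨hc, by simp [htop]⟩

/-- Linear-algebra core of "the RM-torus has dimension at most g−1".  Let `V` be a
finite-dimensional `ℚ`-vector space, `A, N` subspaces, and `C` a (convex) cone containing `N`
(closed under nonnegative rational scaling and under addition).  If `C ∩ A ⊆ N` and `C` is not
contained in `N`, then `dim A − dim(A ∩ N) < dim V − dim N`. -/
theorem stmt5 (V : Type) [AddCommGroup V] [Module ℚ V] [FiniteDimensional ℚ V]
    (A N : Submodule ℚ V) (C : Set V)
    (hNC : (N : Set V) ⊆ C)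
    (hsmul : ∀ (q : ℚ), 0 ≤ q → ∀ x ∈ C, q • x ∈ C)
    (hadd : ∀ x ∈ C, ∀ y ∈ C, x + y ∈ C)
    (hCA : C ∩ (A : Set V) ⊆ (N : Set V))
    (hCnotN : ¬ C ⊆ (N : Set V)) :
    Module.finrank ℚ A - Module.finrank ℚ (A ⊓ N : Submodule ℚ V)
      < Module.finrank ℚ V - Module.finrank ℚ N :=
  stmt5_general V A N C hNC hadd hCA hCnotN
end
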